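/- arXiv:math/0701788 — 2 statements merged into one kernel-verified Lean document; each statement's English description precedes it below -/
import Mathlib

section
/- Existence of a stabilizing ordinal: For every x ∈ X there exists a countable ordinal γ such that for all σ, δ ∈ S^G_{<∞} with rng σ = rng δ: if B_α(x,σ) ≠ B_α(x,δ) for some countable ordinal α ≥ 1, then B_γ(x,σ) ≠ B_γ(x,δ). -/
open Set Pointwise

noncomputable section

/-- `S_∞`, the group of all permutations of `ℕ`. -/
abbrev Sinf : Type := Equiv.Perm ℕ

/-- The topology of pointwise convergence on `S_∞`. -/
instance SinfTopology : TopologicalSpace Sinf :=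
  TopologicalSpace.induced (fun g : Sinf => (g : ℕ → ℕ)) Pi.topologicalSpace

/-- The graph of the restriction of a permutation `g` to a finite set `d`. -/
def restr (g : Sinf) (d : Finset ℕ) : Set (ℕ × ℕ) := {p | p.1 ∈ d ∧ g p.1 = p.2}

/-- The domain of a partial map coded by its graph. -/
def pdom (σ : Set (ℕ × ℕ)) : Set ℕ := Prod.fst '' σ

/-- The range of a partial map coded by its graph. -/
def prng (σ : Set (ℕ × ℕ)) : Set ℕ := Prod.snd '' σ

/-- `S^G_{<∞}`: graphs of restrictions of elements of `G` to finite subsets of `ℕ`. -/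
def SGfin (G : Subgroup Sinf) : Set (Set (ℕ × ℕ)) :=
  {σ | ∃ g ∈ G, ∃ d : Finset ℕ, σ = restr g d}

/-- `V^G_σ`: the elements of `G` extending the partial bijection `σ`. -/
def Vb (G : Subgroup Sinf) (σ : Set (ℕ × ℕ)) : Set G :=
  {g : G | ∀ p ∈ σ, (g : Sinf) p.1 = p.2}

/-- `V^G_c`: the pointwise stabilizer of `c ⊆ ℕ` in `G`. -/
def Vc (G : Subgroup Sinf) (c : Set ℕ) : Set G :=
  {g : G | ∀ k ∈ c, (g : Sinf) k = k}

/-- The identity partial bijection on `c`. -/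
def idb (c : Set ℕ) : Set (ℕ × ℕ) := {p | p.1 ∈ c ∧ p.2 = p.1}

/-- The composition `σ ∘ f`, restricted to `f⁻¹[dom σ]`. -/
def compR (σ : Set (ℕ × ℕ)) (f : Sinf) : Set (ℕ × ℕ) := {p | (f p.1, p.2) ∈ σ}

/-- The composition `f ∘ σ`. -/
def compL (f : Sinf) (σ : Set (ℕ × ℕ)) : Set (ℕ × ℕ) := {p | (p.1, f⁻¹ p.2) ∈ σ}

/-- The Borel classes `Σ⁰_α(X)`: `Σ⁰_1(X)` consists of the open sets, and for `α > 1`,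
`Σ⁰_α(X)` consists of countable unions of sets whose complements lie in
`⋃_{1 ≤ β < α} Σ⁰_β(X)` (i.e. of sets from `⋃_{1 ≤ β < α} Π⁰_β(X)`). -/
def SigmaB (X : Type*) [TopologicalSpace X] (α : Ordinal.{0}) : Set (Set X) :=
  if α ≤ 1 then {s | IsOpen s}
  else {s | ∃ f : ℕ → Set X,
      (∀ n, ∃ β : {γ : Ordinal.{0} // γ < α}, 1 ≤ β.1 ∧ (f n)ᶜ ∈ SigmaB X β.1) ∧
      s = ⋃ n, f n}
termination_by α
decreasing_by exact β.2

/-- The Borel classes `Π⁰_α(X)`: complements of sets in `Σ⁰_α(X)`. -/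
def PiB (X : Type*) [TopologicalSpace X] (α : Ordinal.{0}) : Set (Set X) :=
  {s | sᶜ ∈ SigmaB X α}

section Action

variable (G : Subgroup Sinf) {X : Type*} [TopologicalSpace X] [MulAction G X]

/-- The image `S • x` of a point under a set of group elements. -/
def setOrb (S : Set G) (x : X) : Set X := (fun g : G => g • x) '' S

/-- The image `S • B` of a set under a set of group elements. -/
def setSmul (S : Set G) (B : Set X) : Set X := ⋃ g ∈ S, g • B

/-- The `1`-sets `B₁(x, σ)`. -/
def BsetOne (A : ℕ → Set X) (σ : Set (ℕ × ℕ)) (x : X) : Set X :=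
  (⋂ l, ⋂ (_ : (setOrb G (Vb G σ) x ∩ A l).Nonempty), setSmul G (Vc G (prng σ)) (A l)) ∩
    (⋂ l, ⋂ (_ : setOrb G (Vb G σ) x ∩ A l = ∅), (setSmul G (Vc G (prng σ)) (A l))ᶜ)

/-- The successor step of the recursion defining the `α`-sets. -/
def BsetSucc (prev : Set (ℕ × ℕ) → X → Set X) (σ : Set (ℕ × ℕ)) (x : X) : Set X :=
  (⋂ b : Finset ℕ, ⋂ (_ : pdom σ ⊆ ↑b),
      ⋃ σ' ∈ SGfin G, ⋃ (_ : σ ⊆ σ') (_ : pdom σ' = ↑b), prev σ' x) ∩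
    (⋂ a : Finset ℕ, ⋂ (_ : prng σ ⊆ ↑a),
      ⋃ σ' ∈ SGfin G, ⋃ (_ : σ ⊆ σ') (_ : prng σ' = ↑a), prev σ' x)

/-- The `α`-sets `B_α(x, σ)`, for `α ≥ 1` (the value at `α = 0` is junk). -/
def Bset (A : ℕ → Set X) (α : Ordinal.{0}) : Set (ℕ × ℕ) → X → Set X :=
  @Ordinal.limitRecOn (fun _ => Set (ℕ × ℕ) → X → Set X) α
    (fun _ _ => univ)
    (fun o ih => if o = 0 then BsetOne G A else BsetSucc G ih)
    (fun o _ ih σ x => ⋂ β : Ordinal.{0}, ⋂ (hβ : β < o), ⋂ (_ : 1 ≤ β), ih β hβ σ x)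

/-- The family `𝓑^x_{<α}` consisting of the basic open sets together with all
`β`-sets of `x` for `1 ≤ β < α`. -/
def BltFam (A : ℕ → Set X) (x : X) (α : Ordinal.{0}) : Set (Set X) :=
  {B | (∃ l, B = A l) ∨
    ∃ β : Ordinal.{0}, 1 ≤ β ∧ β < α ∧ ∃ σ ∈ SGfin G, B = Bset G A β σ x}

/-- `γ^G_*(x)`: the least countable ordinal `γ` such that for all `σ, δ ∈ S^G_{<∞}`
with equal ranges, if `B_α(x,σ) ≠ B_α(x,δ)` for some countable ordinal `α ≥ 1`,
then already `B_γ(x,σ) ≠ B_γ(x,δ)`. -/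
def gammaStar (A : ℕ → Set X) (x : X) : Ordinal :=
  sInf {γ : Ordinal.{0} | γ.card ≤ Cardinal.aleph0 ∧
    ∀ σ ∈ SGfin G, ∀ δ ∈ SGfin G, prng σ = prng δ →
      (∃ α : Ordinal.{0}, 1 ≤ α ∧ α.card ≤ Cardinal.aleph0 ∧
        Bset G A α σ x ≠ Bset G A α δ x) →
      Bset G A γ σ x ≠ Bset G A γ δ x}

end Action

/-- The topology on a subset `S ⊆ X` generated by the traces on `S` of the members
of the family `F`. -/
def traceTop {X : Type*} (S : Set X) (F : Set (Set X)) : TopologicalSpace S :=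
  TopologicalSpace.generateFrom {u : Set S | ∃ B ∈ F, u = Subtype.val ⁻¹' B}

/-- The space of closed subsets of `Y`. -/
def EffrosSpace (Y : Type*) [TopologicalSpace Y] := {K : Set Y // IsClosed K}

/-- The Effros Borel structure on the space of closed subsets of `Y`. -/
def effrosSigma (Y : Type*) [TopologicalSpace Y] : MeasurableSpace (EffrosSpace Y) :=
  MeasurableSpace.generateFrom
    {S | ∃ U : Set Y, IsOpen U ∧ S = {K : EffrosSpace Y | (K.1 ∩ U).Nonempty}}


/-!
For every finite `c ⊆ ℕ` and ordinal `α ≥ 1` there is an equivalence relation `typeRel G α c` on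
`X` ("same `α`-type over `c`"), defined by the same transfinite recursion as the `α`-sets but
without reference to `x`, and `B_α(x, σ)` is the class of `h • x` for any `h ∈ G` extending `σ`.
These relations get finer as `α` grows, so if `rng σ = rng δ` and `B_α(x, σ) ≠ B_α(x, δ)`, the two
sets stay different at every `β ≥ α`. As `S^G_{<∞}` is countable, a single countable ordinal
bounds the witnesses `α` for all pairs `(σ, δ)`.
-/

section PartialBijections

variable {G : Subgroup Sinf}

lemma one_mem_Vc (c : Set ℕ) : (1 : G) ∈ Vc G c := fun _ _ => rfl

lemma mul_mem_Vc {c : Set ℕ} {u v : G} (hu : u ∈ Vc G c) (hv : v ∈ Vc G c) :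
    u * v ∈ Vc G c := fun k hk => by
  simp only [Subgroup.coe_mul, Equiv.Perm.mul_apply, hv k hk, hu k hk]

lemma inv_mem_Vc {c : Set ℕ} {u : G} (hu : u ∈ Vc G c) : u⁻¹ ∈ Vc G c := fun k hk => by
  rw [Subgroup.coe_inv, Equiv.Perm.inv_eq_iff_eq, hu k hk]

lemma mem_Vc_image_iff {c : Set ℕ} (g v : G) :
    v ∈ Vc G ((g : Sinf) '' c) ↔ g⁻¹ * v * g ∈ Vc G c := by
  simp only [Vc, Set.mem_ofPred_eq, Set.forall_mem_image, Subgroup.coe_mul, Subgroup.coe_inv,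
    Equiv.Perm.mul_apply, Equiv.Perm.inv_eq_iff_eq]

lemma conj_mem_Vc_image {c : Set ℕ} (g : G) {u : G} (hu : u ∈ Vc G c) :
    g * u * g⁻¹ ∈ Vc G ((g : Sinf) '' c) :=
  (mem_Vc_image_iff g _).2 (by simpa [mul_assoc] using hu)

lemma subset_preimage_of_mapsTo {c : Set ℕ} {g : Sinf} {a : Finset ℕ} (h : Set.MapsTo g c a) :
    c ⊆ ↑(a.preimage g g.injective.injOn) := by
  intro k hk
  simpa using h hk

lemma image_coe_preimage (g : Sinf) (a : Finset ℕ) :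
    (g : ℕ → ℕ) '' ↑(a.preimage g g.injective.injOn) = ↑a := by
  rw [Finset.coe_preimage, Set.image_preimage_eq _ g.surjective]

lemma prng_eq_image_pdom {σ : Set (ℕ × ℕ)} {g : G} (hg : g ∈ Vb G σ) :
    prng σ = (g : Sinf) '' pdom σ := by
  simp only [prng, pdom, Set.image_image]
  exact Set.image_congr fun p hp => (hg p hp).symm

lemma mul_inv_mem_Vc_prng {σ : Set (ℕ × ℕ)} {g h : G} (hg : g ∈ Vb G σ) (hh : h ∈ Vb G σ) :
    g * h⁻¹ ∈ Vc G (prng σ) := by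
  rintro _ ⟨p, hp, rfl⟩
  have : (h : Sinf)⁻¹ p.2 = p.1 := by rw [Equiv.Perm.inv_eq_iff_eq, hh p hp]
  simp only [Subgroup.coe_mul, Subgroup.coe_inv, Equiv.Perm.mul_apply, this, hg p hp]

lemma mul_mem_Vb {σ : Set (ℕ × ℕ)} {u h : G} (hu : u ∈ Vc G (prng σ)) (hh : h ∈ Vb G σ) :
    u * h ∈ Vb G σ := fun p hp => by
  simp only [Subgroup.coe_mul, Equiv.Perm.mul_apply, hh p hp]
  exact hu p.2 ⟨p, hp, rfl⟩

lemma Vb_anti {σ σ' : Set (ℕ × ℕ)} (h : σ ⊆ σ') : Vb G σ' ⊆ Vb G σ :=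
  fun _ hg p hp => hg p (h hp)

lemma restr_mem_SGfin (g : G) (d : Finset ℕ) : restr (g : Sinf) d ∈ SGfin G :=
  ⟨g, g.2, d, rfl⟩

lemma mem_Vb_restr (g : G) (d : Finset ℕ) : g ∈ Vb G (restr (g : Sinf) d) :=
  fun _ hp => hp.2

lemma pdom_restr (g : Sinf) (d : Finset ℕ) : pdom (restr g d) = ↑d := by
  ext k
  exact ⟨fun ⟨_, hp, hk⟩ => hk ▸ hp.1, fun hk => ⟨(k, g k), ⟨hk, rfl⟩, rfl⟩⟩

lemma subset_restr {σ : Set (ℕ × ℕ)} {h : G} (hh : h ∈ Vb G σ) {b : Finset ℕ}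
    (hb : pdom σ ⊆ ↑b) : σ ⊆ restr (h : Sinf) b :=
  fun p hp => ⟨hb ⟨p, hp, rfl⟩, hh p hp⟩

lemma pdom_subset_preimage {σ : Set (ℕ × ℕ)} {g : G} (hg : g ∈ Vb G σ) {a : Finset ℕ}
    (ha : prng σ ⊆ ↑a) :
    pdom σ ⊆ ↑(a.preimage (g : Sinf) (g : Sinf).injective.injOn) :=
  subset_preimage_of_mapsTo fun k hk => ha ((prng_eq_image_pdom hg).symm ▸ ⟨k, hk, rfl⟩)

lemma prng_restr (g : G) (d : Finset ℕ) : prng (restr (g : Sinf) d) = (g : Sinf) '' ↑d := by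
  rw [prng_eq_image_pdom (mem_Vb_restr g d), pdom_restr]

lemma exists_mem_Vb_of_mem_SGfin {σ : Set (ℕ × ℕ)} (hσ : σ ∈ SGfin G) : ∃ g : G, g ∈ Vb G σ := by
  obtain ⟨g, hg, d, rfl⟩ := hσ
  exact ⟨⟨g, hg⟩, fun _ hp => hp.2⟩

lemma finite_restr (g : Sinf) (d : Finset ℕ) : (restr g d).Finite :=
  (d.finite_toSet.prod (d.finite_toSet.image g)).subset fun p hp => ⟨hp.1, p.1, hp.1, hp.2⟩

lemma finite_prng_of_mem_SGfin {σ : Set (ℕ × ℕ)} (hσ : σ ∈ SGfin G) : (prng σ).Finite := by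
  obtain ⟨g, _, d, rfl⟩ := hσ
  exact (finite_restr g d).image _

lemma countable_SGfin : (SGfin G).Countable :=
  (Set.countable_ofPred_finite_subset Set.countable_univ).mono
    (by rintro _ ⟨g, _, d, rfl⟩; exact ⟨finite_restr g d, Set.subset_univ _⟩)

end PartialBijections

section TypeRelation

variable {G : Subgroup Sinf} {X : Type*} [MulAction G X]

lemma mem_setSmul_iff {S : Set G} {B : Set X} {z : X} :
    z ∈ setSmul G S B ↔ ∃ u ∈ S, u⁻¹ • z ∈ B := by
  simp only [setSmul, Set.mem_iUnion, exists_prop, Set.mem_smul_set_iff_inv_smul_mem]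

lemma smul_mem_setSmul_Vc_image_iff (g : G) (c : Set ℕ) (U : Set X) (y : X) :
    g • y ∈ setSmul G (Vc G ((g : Sinf) '' c)) U ↔ y ∈ setSmul G (Vc G c) (g⁻¹ • U) := by
  simp only [mem_setSmul_iff, Set.mem_smul_set_iff_inv_smul_mem, inv_inv, smul_smul]
  constructor
  · rintro ⟨v, hv, hvU⟩
    exact ⟨g⁻¹ * v * g, (mem_Vc_image_iff g v).1 hv, by simpa [mul_assoc] using hvU⟩
  · rintro ⟨u, hu, huU⟩
    exact ⟨g * u * g⁻¹, conj_mem_Vc_image g hu, by simpa [mul_assoc] using huU⟩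

lemma smul_mem_setSmul_Vc_iff {c : Set ℕ} {u : G} (hu : u ∈ Vc G c) (U : Set X) (w : X) :
    u • w ∈ setSmul G (Vc G c) U ↔ w ∈ setSmul G (Vc G c) U := by
  simp only [mem_setSmul_iff, smul_smul]
  constructor
  · rintro ⟨v, hv, hvU⟩
    exact ⟨u⁻¹ * v, mul_mem_Vc (inv_mem_Vc hu) hv, by simpa using hvU⟩
  · rintro ⟨v, hv, hvU⟩
    exact ⟨u * v, mul_mem_Vc hu hv, by simpa [mul_assoc] using hvU⟩

variable (G) in
def IsEquivariantRel (R : Set ℕ → X → X → Prop) : Prop :=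
  ∀ (g : G) c z w, R c z w → R ((g : Sinf) '' c) (g • z) (g • w)

variable (G) in
def typeRelForth (R : Set ℕ → X → X → Prop) (c : Set ℕ) (z w : X) : Prop :=
  ∀ a : Finset ℕ, c ⊆ ↑a → ∃ u ∈ Vc G c, R a z (u • w)

variable (G) in
def typeRelSucc (R : Set ℕ → X → X → Prop) (c : Set ℕ) (z w : X) : Prop :=
  typeRelForth G R c z w ∧ typeRelForth G R c w z

section Successor

variable {R : Set ℕ → X → X → Prop}

lemma typeRelForth_smul (hR : IsEquivariantRel G R)
    {c : Set ℕ} {z w : X} (g : G) (h : typeRelForth G R c z w) :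
    typeRelForth G R ((g : Sinf) '' c) (g • z) (g • w) := by
  intro a' ha'
  obtain ⟨u, hu, hzw⟩ := h (a'.preimage g (g : Sinf).injective.injOn)
    (subset_preimage_of_mapsTo fun k hk => ha' ⟨k, hk, rfl⟩)
  refine ⟨g * u * g⁻¹, conj_mem_Vc_image g hu, ?_⟩
  simpa [image_coe_preimage, smul_smul] using hR g _ _ _ hzw

lemma typeRelForth_trans (hR_smul : IsEquivariantRel G R)
    (hR_trans : ∀ {c z w v}, R c z w → R c w v → R c z v) {c : Set ℕ} {z w v : X}
    (hzw : typeRelForth G R c z w) (hwv : typeRelForth G R c w v) : typeRelForth G R c z v := by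
  intro a ha
  obtain ⟨u₁, hu₁, h₁⟩ := hzw a ha
  obtain ⟨u₂, hu₂, h₂⟩ := hwv (a.preimage u₁ (u₁ : Sinf).injective.injOn)
    (subset_preimage_of_mapsTo fun k hk => by rw [hu₁ k hk]; exact ha hk)
  have h₂' := hR_smul u₁ _ _ _ h₂
  rw [image_coe_preimage, smul_smul] at h₂'
  exact ⟨u₁ * u₂, mul_mem_Vc hu₁ hu₂, hR_trans h₁ h₂'⟩

lemma typeRelForth_smul_right (hR : ∀ c z, R c z z) {c : Set ℕ} {u : G} (hu : u ∈ Vc G c)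
    (z : X) : typeRelForth G R c z (u • z) :=
  fun a _ => ⟨u⁻¹, inv_mem_Vc hu, by simpa using hR a z⟩

lemma typeRelSucc_smul_left (hR : ∀ c z, R c z z) {c : Set ℕ} {u : G} (hu : u ∈ Vc G c)
    (w : X) : typeRelSucc G R c (u • w) w := by
  refine ⟨?_, typeRelForth_smul_right hR hu w⟩
  simpa using typeRelForth_smul_right hR (inv_mem_Vc hu) (u • w)

lemma typeRelSucc_le (hR_smul : ∀ c (u : G) w, u ∈ Vc G c → R c (u • w) w)
    (hR_trans : ∀ {c z w v}, R c z w → R c w v → R c z v) {c : Set ℕ} (hc : c.Finite) {z w : X}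
    (h : typeRelSucc G R c z w) : R c z w := by
  obtain ⟨u, hu, hzw⟩ := h.1 hc.toFinset hc.coe_toFinset.ge
  rw [hc.coe_toFinset] at hzw
  exact hR_trans hzw (hR_smul c u w hu)

end Successor

variable [TopologicalSpace X]

variable (G) in
def typeRelOne (c : Set ℕ) (z w : X) : Prop :=
  ∀ U : Set X, IsOpen U → (z ∈ setSmul G (Vc G c) U ↔ w ∈ setSmul G (Vc G c) U)

lemma mem_setSmul_of_isOpen_iff {A : ℕ → Set X}
    (hbasis : TopologicalSpace.IsTopologicalBasis (Set.range A)) {U : Set X} (hU : IsOpen U)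
    (S : Set G) (z : X) :
    z ∈ setSmul G S U ↔ ∃ l, A l ⊆ U ∧ z ∈ setSmul G S (A l) := by
  simp only [mem_setSmul_iff]
  constructor
  · rintro ⟨u, hu, huU⟩
    obtain ⟨_, ⟨l, rfl⟩, hl, hlU⟩ := hbasis.exists_subset_of_mem_open huU hU
    exact ⟨l, hlU, u, hu, hl⟩
  · rintro ⟨l, hlU, u, hu, hl⟩
    exact ⟨u, hu, hlU hl⟩

lemma typeRelOne_iff_basis {A : ℕ → Set X}
    (hbasis : TopologicalSpace.IsTopologicalBasis (Set.range A)) {c : Set ℕ} {z w : X} :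
    typeRelOne G c z w ↔ ∀ l, (z ∈ setSmul G (Vc G c) (A l) ↔ w ∈ setSmul G (Vc G c) (A l)) := by
  refine ⟨fun h l => h _ (hbasis.isOpen ⟨l, rfl⟩), fun h U hU => ?_⟩
  simp only [mem_setSmul_of_isOpen_iff hbasis hU, h]

lemma typeRelOne_smul [ContinuousSMul G X] {c : Set ℕ} {z w : X} (g : G)
    (h : typeRelOne G c z w) : typeRelOne G ((g : Sinf) '' c) (g • z) (g • w) := fun U hU => by
  simpa only [smul_mem_setSmul_Vc_image_iff] using h _ (hU.smul g⁻¹)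

lemma typeRelOne_smul_left {c : Set ℕ} {u : G} (hu : u ∈ Vc G c) (w : X) :
    typeRelOne G c (u • w) w := fun U _ => smul_mem_setSmul_Vc_iff hu U w

variable (G) in
def typeRel (α : Ordinal.{0}) : Set ℕ → X → X → Prop :=
  @Ordinal.limitRecOn (fun _ => Set ℕ → X → X → Prop) α (fun _ _ _ => True)
    (fun o R => if o = 0 then typeRelOne G else typeRelSucc G R)
    (fun o _ R c z w => ∀ β (hβ : β < o), 1 ≤ β → R β hβ c z w)

lemma typeRel_zero : typeRel G (X := X) 0 = fun _ _ _ => True :=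
  Ordinal.limitRecOn_zero ..

lemma typeRel_one : typeRel G (X := X) 1 = typeRelOne G := by
  rw [← zero_add 1, typeRel, Ordinal.limitRecOn_add_one, if_pos rfl]

lemma typeRel_add_one {o : Ordinal.{0}} (ho : o ≠ 0) :
    typeRel G (X := X) (o + 1) = typeRelSucc G (typeRel G o) := by
  rw [typeRel, Ordinal.limitRecOn_add_one, if_neg ho]
  rfl

lemma typeRel_limit {o : Ordinal.{0}} (ho : Order.IsSuccLimit o) :
    typeRel G (X := X) o = fun c z w => ∀ β < o, 1 ≤ β → typeRel G β c z w := by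
  rw [typeRel, Ordinal.limitRecOn_limit _ _ _ _ ho]
  rfl

end TypeRelation

section TypeRelationProperties

variable {G : Subgroup Sinf} {X : Type*} [TopologicalSpace X] [MulAction G X]

lemma typeRel_smul_left (α : Ordinal.{0}) :
    ∀ {c : Set ℕ} {u : G}, u ∈ Vc G c → ∀ w : X, typeRel G α c (u • w) w := by
  induction α using Ordinal.limitRecOn with
  | zero => simp [typeRel_zero]
  | add_one o ih =>
    rcases eq_or_ne o 0 with rfl | ho
    · simpa only [zero_add, typeRel_one] using @typeRelOne_smul_left G X _ _
    · rw [typeRel_add_one ho]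
      exact typeRelSucc_smul_left fun c z => by simpa using ih (one_mem_Vc c) z
  | limit o hl ih => simp only [typeRel_limit hl]; exact fun hu w β hβ _ => ih β hβ hu w

lemma typeRel_refl (α : Ordinal.{0}) (c : Set ℕ) (z : X) : typeRel G α c z z := by
  simpa using typeRel_smul_left (G := G) α (one_mem_Vc c) z

lemma typeRel_symm (α : Ordinal.{0}) : ∀ {c : Set ℕ} {z w : X},
    typeRel G α c z w → typeRel G α c w z := by
  induction α using Ordinal.limitRecOn with
  | zero => simp [typeRel_zero]
  | add_one o ih =>
    rcases eq_or_ne o 0 with rfl | ho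
    · simp only [zero_add, typeRel_one]; exact fun h U hU => (h U hU).symm
    · simp only [typeRel_add_one ho]; exact And.symm
  | limit o hl ih => simp only [typeRel_limit hl]; exact fun h β hβ h1 => ih β hβ (h β hβ h1)

lemma typeRel_smul [ContinuousSMul G X] (α : Ordinal.{0}) :
    IsEquivariantRel G (typeRel (X := X) G α) := by
  induction α using Ordinal.limitRecOn with
  | zero => simp [typeRel_zero, IsEquivariantRel]
  | add_one o ih =>
    rcases eq_or_ne o 0 with rfl | ho
    · simp only [zero_add, typeRel_one]; exact fun g _ _ _ h => typeRelOne_smul g h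
    · simp only [typeRel_add_one ho]
      exact fun g _ _ _ h => ⟨typeRelForth_smul ih g h.1, typeRelForth_smul ih g h.2⟩
  | limit o hl ih =>
    simp only [typeRel_limit hl]; exact fun g _ _ _ h β hβ h1 => ih β hβ g _ _ _ (h β hβ h1)

lemma typeRel_trans [ContinuousSMul G X] (α : Ordinal.{0}) : ∀ {c : Set ℕ} {z w v : X},
    typeRel G α c z w → typeRel G α c w v → typeRel G α c z v := by
  induction α using Ordinal.limitRecOn with
  | zero => simp [typeRel_zero]
  | add_one o ih =>
    rcases eq_or_ne o 0 with rfl | ho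
    · simp only [zero_add, typeRel_one]; exact fun h₁ h₂ U hU => (h₁ U hU).trans (h₂ U hU)
    · simp only [typeRel_add_one ho]
      exact fun {_ _ _ _} h₁ h₂ => ⟨typeRelForth_trans (typeRel_smul o) ih h₁.1 h₂.1,
        typeRelForth_trans (typeRel_smul o) ih h₂.2 h₁.2⟩
  | limit o hl ih =>
    simp only [typeRel_limit hl]; exact fun h₁ h₂ β hβ h1 => ih β hβ (h₁ β hβ h1) (h₂ β hβ h1)

lemma typeRel_anti [ContinuousSMul G X] {c : Set ℕ} (hc : c.Finite) {z w : X} (β : Ordinal.{0}) :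
    ∀ {α}, α ≤ β → typeRel G β c z w → typeRel G α c z w := by
  induction β using Ordinal.limitRecOn with
  | zero => intro α hα h; rwa [nonpos_iff_eq_zero.1 hα]
  | add_one o ih =>
    intro α hα h
    rcases hα.lt_or_eq with hα | rfl
    · refine ih (Order.lt_add_one_iff.1 hα) ?_
      rcases eq_or_ne o 0 with rfl | ho
      · simp [typeRel_zero]
      · rw [typeRel_add_one ho] at h
        exact typeRelSucc_le (fun _ _ w hu => typeRel_smul_left o hu w) (typeRel_trans o) hc h
    · exact h
  | limit o hl ih =>
    intro α hα h
    rcases hα.lt_or_eq with hα | rfl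
    · rcases eq_or_ne α 0 with rfl | hα0
      · simp [typeRel_zero]
      · rw [typeRel_limit hl] at h
        exact h α hα (Order.one_le_iff_ne_zero.2 hα0)
    · exact h

end TypeRelationProperties

section AlphaSets

variable {G : Subgroup Sinf} {X : Type*} [MulAction G X]

variable (G) in
lemma Bset_one (A : ℕ → Set X) : Bset G A 1 = BsetOne G A := by
  rw [← zero_add 1, Bset, Ordinal.limitRecOn_add_one, if_pos rfl]

variable (G) in
lemma Bset_add_one (A : ℕ → Set X) {o : Ordinal.{0}} (ho : o ≠ 0) :
    Bset G A (o + 1) = BsetSucc G (Bset G A o) := by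
  rw [Bset, Ordinal.limitRecOn_add_one, if_neg ho]
  rfl

variable (G) in
lemma Bset_limit (A : ℕ → Set X) {o : Ordinal.{0}} (ho : Order.IsSuccLimit o) :
    Bset G A o = fun σ x => ⋂ β : Ordinal.{0}, ⋂ (_ : β < o), ⋂ (_ : 1 ≤ β), Bset G A β σ x := by
  rw [Bset, Ordinal.limitRecOn_limit _ _ _ _ ho]
  rfl

lemma setOrb_Vb_inter_nonempty_iff {σ : Set (ℕ × ℕ)} {h : G} (hh : h ∈ Vb G σ) (x : X)
    (B : Set X) :
    (setOrb G (Vb G σ) x ∩ B).Nonempty ↔ h • x ∈ setSmul G (Vc G (prng σ)) B := by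
  rw [mem_setSmul_iff]
  constructor
  · rintro ⟨_, ⟨g, hg, rfl⟩, hgx⟩
    exact ⟨h * g⁻¹, mul_inv_mem_Vc_prng hh hg, by simpa [smul_smul] using hgx⟩
  · rintro ⟨u, hu, hux⟩
    exact ⟨_, ⟨u⁻¹ * h, mul_mem_Vb (inv_mem_Vc hu) hh, rfl⟩, by simpa [mul_smul] using hux⟩

variable {x : X} {P : Set (ℕ × ℕ) → X → Set X} {R : Set ℕ → X → X → Prop}
  {σ : Set (ℕ × ℕ)} {h : G}

lemma exists_prng_extension_iff
    (hPR : ∀ σ' ∈ SGfin G, ∀ g ∈ Vb G σ', P σ' x = {z | R (prng σ') z (g • x)})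
    (hh : h ∈ Vb G σ) (z : X) :
    (∀ a : Finset ℕ, prng σ ⊆ ↑a →
      ∃ σ' ∈ SGfin G, σ ⊆ σ' ∧ prng σ' = ↑a ∧ z ∈ P σ' x) ↔
    typeRelForth G R (prng σ) z (h • x) := by
  constructor
  · intro hext a ha
    obtain ⟨σ', hσ', hσσ', hrng, hz⟩ := hext a ha
    obtain ⟨g, hg⟩ := exists_mem_Vb_of_mem_SGfin hσ'
    rw [hPR σ' hσ' g hg, hrng] at hz
    exact ⟨g * h⁻¹, mul_inv_mem_Vc_prng (Vb_anti hσσ' hg) hh, by simpa [smul_smul] using hz⟩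
  · intro hforth a ha
    obtain ⟨u, hu, hz⟩ := hforth a ha
    set g : G := u * h
    have hg : g ∈ Vb G σ := mul_mem_Vb hu hh
    set b := a.preimage (g : Sinf) (g : Sinf).injective.injOn
    have hrng : prng (restr (g : Sinf) b) = ↑a := by
      rw [prng_restr, image_coe_preimage]
    refine ⟨_, restr_mem_SGfin _ b, subset_restr hg (pdom_subset_preimage hg ha), hrng, ?_⟩
    rw [hPR _ (restr_mem_SGfin _ b) _ (mem_Vb_restr _ b), hrng]
    simpa [g, mul_smul] using hz

lemma exists_pdom_extension_iff
    (hPR : ∀ σ' ∈ SGfin G, ∀ g ∈ Vb G σ', P σ' x = {z | R (prng σ') z (g • x)})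
    (hR_smul : IsEquivariantRel G R)
    (hR_symm : ∀ {c z w}, R c z w → R c w z) (hh : h ∈ Vb G σ) (z : X) :
    (∀ b : Finset ℕ, pdom σ ⊆ ↑b →
      ∃ σ' ∈ SGfin G, σ ⊆ σ' ∧ pdom σ' = ↑b ∧ z ∈ P σ' x) ↔
    typeRelForth G R (prng σ) (h • x) z := by
  constructor
  · intro hext a ha
    obtain ⟨σ', hσ', hσσ', hdom, hz⟩ :=
      hext (a.preimage (h : Sinf) (h : Sinf).injective.injOn) (pdom_subset_preimage hh ha)
    obtain ⟨g, hg⟩ := exists_mem_Vb_of_mem_SGfin hσ'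
    rw [hPR σ' hσ' g hg, prng_eq_image_pdom hg, hdom] at hz
    refine ⟨h * g⁻¹, mul_inv_mem_Vc_prng hh (Vb_anti hσσ' hg), hR_symm ?_⟩
    have := hR_smul (h * g⁻¹) _ _ _ hz
    rw [smul_smul, inv_mul_cancel_right, Set.image_image] at this
    simpa only [Subgroup.coe_mul, Subgroup.coe_inv, Equiv.Perm.mul_apply,
      Equiv.Perm.coe_inv, Equiv.symm_apply_apply, image_coe_preimage] using this
  · intro hforth b hb
    have ha : prng σ ⊆ ↑(b.image (h : Sinf)) := by
      rw [prng_eq_image_pdom hh, Finset.coe_image]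
      exact Set.image_mono hb
    obtain ⟨u, hu, hz⟩ := hforth _ ha
    have hg : u⁻¹ * h ∈ Vb G σ := mul_mem_Vb (inv_mem_Vc hu) hh
    refine ⟨_, restr_mem_SGfin _ b, subset_restr hg hb, pdom_restr _ b, ?_⟩
    rw [hPR _ (restr_mem_SGfin _ b) _ (mem_Vb_restr _ b), prng_restr]
    have := hR_smul u⁻¹ _ _ _ (hR_symm hz)
    simpa [Finset.coe_image, Set.image_image, mul_smul] using this

lemma BsetSucc_eq_setOf_typeRelSucc
    (hPR : ∀ σ' ∈ SGfin G, ∀ g ∈ Vb G σ', P σ' x = {z | R (prng σ') z (g • x)})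
    (hR_smul : IsEquivariantRel G R)
    (hR_symm : ∀ {c z w}, R c z w → R c w z) (hh : h ∈ Vb G σ) :
    BsetSucc G P σ x = {z | typeRelSucc G R (prng σ) z (h • x)} := by
  ext z
  simp only [BsetSucc, Set.mem_inter_iff, Set.mem_iInter, Set.mem_iUnion, exists_prop,
    Set.mem_ofPred_eq, typeRelSucc]
  rw [exists_pdom_extension_iff hPR hR_smul hR_symm hh, exists_prng_extension_iff hPR hh]
  exact and_comm

variable [TopologicalSpace X]

lemma BsetOne_eq_setOf_typeRelOne {A : ℕ → Set X}
    (hbasis : TopologicalSpace.IsTopologicalBasis (Set.range A)) {σ : Set (ℕ × ℕ)} {h : G}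
    (hh : h ∈ Vb G σ) (x : X) :
    BsetOne G A σ x = {z | typeRelOne G (prng σ) z (h • x)} := by
  ext z
  simp only [BsetOne, Set.mem_inter_iff, Set.mem_iInter, Set.mem_compl_iff, Set.mem_ofPred_eq,
    typeRelOne_iff_basis hbasis, ← Set.not_nonempty_iff_eq_empty,
    setOrb_Vb_inter_nonempty_iff hh, ← forall_and]
  exact forall_congr' fun l => by tauto

end AlphaSets

section AlphaSetsAsClasses

variable {G : Subgroup Sinf} {X : Type*} [TopologicalSpace X] [MulAction G X] [ContinuousSMul G X]

lemma Bset_eq_setOf_typeRel {A : ℕ → Set X}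
    (hbasis : TopologicalSpace.IsTopologicalBasis (Set.range A)) (x : X) (α : Ordinal.{0}) :
    1 ≤ α → ∀ σ ∈ SGfin G, ∀ h ∈ Vb G σ, Bset G A α σ x = {z | typeRel G α (prng σ) z (h • x)} := by
  induction α using Ordinal.limitRecOn with
  | zero => simp
  | add_one o ih =>
    intro _ σ _ h hh
    rcases eq_or_ne o 0 with rfl | ho
    · rw [zero_add, Bset_one, typeRel_one, BsetOne_eq_setOf_typeRelOne hbasis hh]
    · rw [Bset_add_one G A ho, typeRel_add_one ho]
      exact BsetSucc_eq_setOf_typeRelSucc (ih (Order.one_le_iff_ne_zero.2 ho))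
        (typeRel_smul o) (typeRel_symm o) hh
  | limit o hl ih =>
    intro _ σ hσ h hh
    rw [Bset_limit G A hl, typeRel_limit hl]
    ext z
    simp only [Set.mem_iInter, Set.mem_ofPred_eq]
    exact forall₃_congr fun β hβ h1 => by rw [ih β hβ h1 σ hσ h hh, Set.mem_ofPred_eq]

lemma Bset_eq_of_le {A : ℕ → Set X}
    (hbasis : TopologicalSpace.IsTopologicalBasis (Set.range A)) (x : X) {α β : Ordinal.{0}}
    (hα : 1 ≤ α) (hαβ : α ≤ β) {σ δ : Set (ℕ × ℕ)} (hσ : σ ∈ SGfin G) (hδ : δ ∈ SGfin G)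
    (hrng : prng σ = prng δ) (heq : Bset G A β σ x = Bset G A β δ x) :
    Bset G A α σ x = Bset G A α δ x := by
  obtain ⟨h, hh⟩ := exists_mem_Vb_of_mem_SGfin hσ
  obtain ⟨k, hk⟩ := exists_mem_Vb_of_mem_SGfin hδ
  have hkx : k • x ∈ Bset G A β σ x := by
    rw [heq, Bset_eq_setOf_typeRel hbasis x β (hα.trans hαβ) δ hδ k hk]
    exact typeRel_refl β _ _
  rw [Bset_eq_setOf_typeRel hbasis x β (hα.trans hαβ) σ hσ h hh] at hkx
  have hkh : typeRel G α (prng σ) (k • x) (h • x) :=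
    typeRel_anti (finite_prng_of_mem_SGfin hσ) β hαβ hkx
  rw [Bset_eq_setOf_typeRel hbasis x α hα σ hσ h hh,
    Bset_eq_setOf_typeRel hbasis x α hα δ hδ k hk, ← hrng]
  ext z
  exact ⟨fun hz => typeRel_trans α hz (typeRel_symm α hkh), fun hz => typeRel_trans α hz hkh⟩

end AlphaSetsAsClasses

lemma Ordinal.card_le_aleph0_iff_lt_omega_one {o : Ordinal.{0}} :
    o.card ≤ Cardinal.aleph0 ↔ o < Ordinal.omega 1 := by
  rw [← Cardinal.ord_aleph, Cardinal.lt_ord, Cardinal.lt_aleph_one_iff]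

lemma Ordinal.exists_countable_forall_le {ι : Type} [Countable ι] (f : ι → Ordinal.{0})
    (hf : ∀ i, (f i).card ≤ Cardinal.aleph0) :
    ∃ γ : Ordinal.{0}, γ.card ≤ Cardinal.aleph0 ∧ ∀ i, f i ≤ γ :=
  ⟨⨆ i, f i, card_le_aleph0_iff_lt_omega_one.2 <|
    iSup_lt_omega_one fun i => card_le_aleph0_iff_lt_omega_one.1 (hf i), Ordinal.le_iSup f⟩

theorem exists_stabilizing_ordinal_general
    (G : Subgroup Sinf)
    {X : Type*} [TopologicalSpace X] [MulAction G X] [ContinuousSMul G X]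
    (A : ℕ → Set X) (hbasis : TopologicalSpace.IsTopologicalBasis (Set.range A))
    (x : X) :
    ∃ γ : Ordinal.{0}, γ.card ≤ Cardinal.aleph0 ∧
      ∀ σ ∈ SGfin G, ∀ δ ∈ SGfin G, prng σ = prng δ →
        (∃ α : Ordinal.{0}, 1 ≤ α ∧ α.card ≤ Cardinal.aleph0 ∧
          Bset G A α σ x ≠ Bset G A α δ x) →
        Bset G A γ σ x ≠ Bset G A γ δ x := by
  let T : Set (Set (ℕ × ℕ) × Set (ℕ × ℕ)) :=
    {p | p.1 ∈ SGfin G ∧ p.2 ∈ SGfin G ∧ prng p.1 = prng p.2 ∧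
      ∃ α : Ordinal.{0}, 1 ≤ α ∧ α.card ≤ Cardinal.aleph0 ∧ Bset G A α p.1 x ≠ Bset G A α p.2 x}
  have hT : T.Countable := (countable_SGfin.prod countable_SGfin).mono
    fun _ hp => Set.mem_prod.2 ⟨hp.1, hp.2.1⟩
  have := hT.to_subtype
  choose α hα hαc hαne using fun p : T => p.2.2.2.2
  obtain ⟨γ, hγ, hαγ⟩ := Ordinal.exists_countable_forall_le α hαc
  refine ⟨γ, hγ, fun σ hσ δ hδ hrng hdiff => ?_⟩
  let p : T := ⟨(σ, δ), hσ, hδ, hrng, hdiff⟩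
  exact mt (Bset_eq_of_le hbasis x (hα p) (hαγ p) hσ hδ hrng) (hαne p)

/-- Existence of a stabilizing ordinal. -/
theorem exists_stabilizing_ordinal
    (G : Subgroup Sinf) (hGclosed : IsClosed (G : Set Sinf))
    {X : Type*} [TopologicalSpace X] [PolishSpace X] [MulAction G X] [ContinuousSMul G X]
    (A : ℕ → Set X) (hbasis : TopologicalSpace.IsTopologicalBasis (Set.range A))
    (hbasisInv : ∀ l, ∃ c : Finset ℕ, ∀ g ∈ Vc G (↑c : Set ℕ), g • A l = A l)
    (x : X) :
    ∃ γ : Ordinal.{0}, γ.card ≤ Cardinal.aleph0 ∧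
      ∀ σ ∈ SGfin G, ∀ δ ∈ SGfin G, prng σ = prng δ →
        (∃ α : Ordinal.{0}, 1 ≤ α ∧ α.card ≤ Cardinal.aleph0 ∧
          Bset G A α σ x ≠ Bset G A α δ x) →
        Bset G A γ σ x ≠ Bset G A γ δ x :=
  exists_stabilizing_ordinal_general G A hbasis x
end
end

section
/- Disjointness criterion for local conjugacy classes in S_∞: Let f, g be conjugate permutations of ℕ (i.e. g = v f v⁻¹ for some permutation v) and let c ⊆ ℕ be a finite set. Then {h f h⁻¹ : h ∈ V_c} ∩ {h g h⁻¹ : h ∈ V_c} = ∅ if and only if there exist k ∈ c and an integer m ∈ ℤ such that (f^m(k) ∈ c or g^m(k) ∈ c) and f^m(k) ≠ g^m(k). -/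
open Set Pointwise

noncomputable section

/-!
If some `u` fixing `c` pointwise conjugates `f` to `g`, then `g^m k = u (f^m k)` for `k ∈ c`, so
`f^m k` and `g^m k` agree as soon as one of them lies in `c`. Conversely, under that condition
`f^m k ↦ g^m k` is a well-defined bijection from the union of the `f`-cycles through `c` onto the
union of the `g`-cycles through `c`; it intertwines `f` with `g` and fixes `c`. Off these unions
`f` and `g` still have the same cycle type (the number of cycles of each length, infinite cycles
included): the cycle types of `f` and `g` agree because they are conjugate, and the same finitely
many cycles have been removed from both. Permutations with the same cycle type are conjugate, so
gluing yields a conjugator in `V_c`, and then `g` lies in both local conjugacy classes.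
-/

open Function Cardinal

universe u

theorem Function.Semiconj.minimalPeriod_eq {α β : Type*} {fa : α → α} {fb : β → β} {g : α → β}
    (h : Semiconj g fa fb) (hg : Injective g) (x : α) :
    minimalPeriod fb (g x) = minimalPeriod fa x :=
  minimalPeriod_eq_minimalPeriod_iff.mpr fun n => by
    simp only [IsPeriodicPt, IsFixedPt, ← (h.iterate_right n) x, hg.eq_iff]

theorem Function.Surjective.exists_equiv_apply_eq {A S T : Type*} {p : A → S} {q : A → T}
    (hp : Surjective p) (hq : Surjective q) (h : ∀ a b, p a = p b ↔ q a = q b) :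
    ∃ e : S ≃ T, ∀ a, e (p a) = q a := by
  have hcomm : ∀ a, q (surjInv hp (p a)) = q a := fun a => (h _ _).mp (surjInv_eq hp (p a))
  refine ⟨Equiv.ofBijective (q ∘ surjInv hp) ⟨?_, ?_⟩, hcomm⟩
  · intro s s' hss'
    rw [← surjInv_eq hp s, ← surjInv_eq hp s']
    exact (h _ _).mpr hss'
  · intro t
    obtain ⟨a, rfl⟩ := hq t
    exact ⟨p a, hcomm a⟩

theorem Cardinal.mk_subtype_sumElim_eq {α β : Type u} {ι : Type*} (f : α → ι) (g : β → ι)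
    (i : ι) : #{z // Sum.elim f g z = i} = #{a // f a = i} + #{b // g b = i} := by
  rw [add_def]
  exact mk_congr Equiv.subtypeSum

theorem Subgroup.conj_inter_conj_eq_empty_iff {G : Type*} [Group G] (H : Subgroup G) (a b : G) :
    {k | ∃ h ∈ H, k = h * a * h⁻¹} ∩ {k | ∃ h ∈ H, k = h * b * h⁻¹} = ∅ ↔
      ∀ h ∈ H, h * a * h⁻¹ ≠ b := by
  rw [Set.eq_empty_iff_forall_notMem]
  constructor
  · rintro hempty h hH rfl
    exact hempty _ ⟨⟨h, hH, rfl⟩, ⟨1, H.one_mem, by group⟩⟩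
  · rintro hne k ⟨⟨h₁, h₁H, rfl⟩, ⟨h₂, h₂H, hk⟩⟩
    refine hne (h₂⁻¹ * h₁) (H.mul_mem (H.inv_mem h₂H) h₁H) ?_
    calc h₂⁻¹ * h₁ * a * (h₂⁻¹ * h₁)⁻¹ = h₂⁻¹ * (h₁ * a * h₁⁻¹) * h₂ := by group
      _ = b := by rw [hk]; group

namespace Equiv.Perm

variable {X Y : Type u} {σ : Perm X} {τ : Perm Y}

theorem zpow_apply_eq_zpow_apply_iff_zpow_sub (σ : Perm X) (x y : X) (a b : ℤ) :
    (σ ^ a) x = (σ ^ b) y ↔ (σ ^ (a - b)) x = y := by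
  rw [sub_eq_neg_add, zpow_add, zpow_neg, mul_apply, inv_eq_iff_eq]

theorem zpow_apply_eq_zpow_apply_iff (σ : Perm X) (x : X) (a b : ℤ) :
    (σ ^ a) x = (σ ^ b) x ↔ (minimalPeriod σ x : ℤ) ∣ a - b := by
  rw [zpow_apply_eq_zpow_apply_iff_zpow_sub]
  exact MulAction.zpow_smul_eq_iff_minimalPeriod_dvd (a := σ)

theorem semiconj_iff_mul_inv_eq (u σ τ : Perm X) : Semiconj u σ τ ↔ u * σ * u⁻¹ = τ := by
  rw [mul_inv_eq_iff_eq_mul, Perm.ext_iff]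
  rfl

theorem _root_.Function.Semiconj.perm_zpow {e : X ≃ Y} (h : Semiconj e σ τ) (n : ℤ) :
    Semiconj e ⇑(σ ^ n) ⇑(τ ^ n) := by
  have hτ : e.permCongrHom σ = τ := Equiv.ext fun y => by simpa using h (e.symm y)
  intro x
  rw [← hτ, ← map_zpow]
  simp

theorem _root_.Function.Semiconj.sameCycle_iff {e : X ≃ Y} (h : Semiconj e σ τ) {a b : X} :
    SameCycle τ (e a) (e b) ↔ SameCycle σ a b :=
  ⟨fun ⟨m, hm⟩ => ⟨m, e.injective (by rw [h.perm_zpow m, hm])⟩,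
    fun ⟨m, hm⟩ => ⟨m, by rw [← h.perm_zpow m, hm]⟩⟩

theorem SameCycle.minimalPeriod_eq {x y : X} (h : SameCycle σ x y) :
    minimalPeriod σ x = minimalPeriod σ y := by
  obtain ⟨i, rfl⟩ := h
  have hcomm : Semiconj (σ ^ i) σ σ := fun z => by
    rw [← mul_apply, ← mul_apply, (Commute.self_zpow σ i).eq]
  exact (hcomm.minimalPeriod_eq (σ ^ i).injective x).symm

theorem zpow_apply_mem_iff {s : Set X} (hs : ∀ x, σ x ∈ s ↔ x ∈ s) (n : ℤ) (x : X) :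
    (σ ^ n) x ∈ s ↔ x ∈ s := by
  have hmem : ∀ (n : ℤ) x, x ∈ s → (σ ^ n) x ∈ s := fun n x hx => by
    simpa using (((σ.subtypePerm hs) ^ n) ⟨x, hx⟩).2
  refine ⟨fun h => ?_, hmem n x⟩
  simpa using hmem (-n) _ h

theorem SameCycle.mem_iff {s : Set X} (hs : ∀ x, σ x ∈ s ↔ x ∈ s) {x y : X}
    (h : SameCycle σ x y) : x ∈ s ↔ y ∈ s := by
  obtain ⟨i, rfl⟩ := h
  exact (zpow_apply_mem_iff hs i x).symm

theorem minimalPeriod_subtypePerm {p : X → Prop} (hp : ∀ x, p (σ x) ↔ p x) (x : {x // p x}) :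
    minimalPeriod (σ.subtypePerm hp) x = minimalPeriod σ x :=
  (Semiconj.minimalPeriod_eq (g := Subtype.val) (fun _ => rfl) Subtype.val_injective x).symm

abbrev Cycles (σ : Perm X) : Type u := Quotient (SameCycle.setoid σ)

/-- `minimalPeriod` is `0` on an infinite cycle, so `cycleCount σ 0` counts the infinite
cycles. -/
def cyclePeriod (σ : Perm X) : Cycles σ → ℕ :=
  Quotient.lift (minimalPeriod σ) fun _ _ h => h.minimalPeriod_eq

def cycleCount (σ : Perm X) (n : ℕ) : Cardinal.{u} := #{q // cyclePeriod σ q = n}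

@[simp]
theorem cyclePeriod_mk (x : X) : cyclePeriod σ (Quotient.mk _ x) = minimalPeriod σ x := rfl

theorem cyclePeriod_eq_minimalPeriod_out (q : Cycles σ) :
    cyclePeriod σ q = minimalPeriod σ q.out := by
  conv_lhs => rw [← q.out_eq]
  rfl

theorem cycleCount_lt_aleph0 (σ : Perm X) [Finite (Cycles σ)] (n : ℕ) : cycleCount σ n < ℵ₀ :=
  lt_aleph0_of_finite _

theorem mk_zpow_apply (m : ℤ) (x : X) :
    (Quotient.mk _ ((σ ^ m) x) : Cycles σ) = Quotient.mk _ x :=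
  (Quotient.sound (⟨m, rfl⟩ : SameCycle σ x ((σ ^ m) x))).symm

theorem zpow_apply_out_eq_iff (q q' : Cycles σ) (m m' : ℤ) :
    (σ ^ m) q.out = (σ ^ m') q'.out ↔ q = q' ∧ (cyclePeriod σ q : ℤ) ∣ m - m' := by
  constructor
  · intro h
    have hq : q = q' := calc
      q = Quotient.mk _ ((σ ^ m) q.out) := by rw [mk_zpow_apply, q.out_eq]
      _ = q' := by rw [h, mk_zpow_apply, q'.out_eq]
    subst hq
    exact ⟨rfl, by rwa [cyclePeriod_eq_minimalPeriod_out, ← zpow_apply_eq_zpow_apply_iff]⟩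
  · rintro ⟨rfl, hdvd⟩
    rwa [zpow_apply_eq_zpow_apply_iff, ← cyclePeriod_eq_minimalPeriod_out]

/-- Parametrise each cycle `q` of `σ` by `m ↦ σ ^ m q.out` and the cycle `Φ q` of `τ` by
`m ↦ τ ^ m (Φ q).out`: equal lengths make both parametrisations identify the same exponents. -/
theorem exists_semiconj_of_equiv_cycles (Φ : Cycles σ ≃ Cycles τ)
    (hΦ : ∀ q, cyclePeriod τ (Φ q) = cyclePeriod σ q) : ∃ e : X ≃ Y, Semiconj e σ τ := by
  let p : Cycles σ × ℤ → X := fun a => (σ ^ a.2) a.1.out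
  let r : Cycles σ × ℤ → Y := fun a => (τ ^ a.2) (Φ a.1).out
  have hp : Surjective p := fun x => by
    obtain ⟨m, hm⟩ := Quotient.mk_out (s := SameCycle.setoid σ) x
    exact ⟨(Quotient.mk _ x, m), hm⟩
  have hr : Surjective r := fun y => by
    obtain ⟨m, hm⟩ := Quotient.mk_out (s := SameCycle.setoid τ) y
    exact ⟨(Φ.symm (Quotient.mk _ y), m), by simpa [r] using hm⟩
  have hker : ∀ a b, p a = p b ↔ r a = r b := fun a b => by
    simp only [p, r, zpow_apply_out_eq_iff, Φ.injective.eq_iff, hΦ]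
  obtain ⟨e, he⟩ := hp.exists_equiv_apply_eq hr hker
  refine ⟨e, fun x => ?_⟩
  obtain ⟨⟨q, m⟩, rfl⟩ := hp x
  have hσ : σ (p (q, m)) = p (q, 1 + m) := by simp [p, zpow_one_add]
  rw [hσ, he, he]
  simp [r, zpow_one_add]

theorem exists_semiconj_iff_cycleCount_eq :
    (∃ e : X ≃ Y, Semiconj e σ τ) ↔ cycleCount σ = cycleCount τ := by
  constructor
  · rintro ⟨e, h⟩
    funext n
    refine mk_congr ((Quotient.congr e fun _ _ => h.sameCycle_iff.symm).subtypeEquiv fun q => ?_)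
    induction q using Quotient.inductionOn with
    | h a => rw [Quotient.congr_mk, cyclePeriod_mk, cyclePeriod_mk, h.minimalPeriod_eq e.injective]
  · intro h
    let φ n : {q // cyclePeriod σ q = n} ≃ {q // cyclePeriod τ q = n} :=
      (Cardinal.eq.mp (congrFun h n)).some
    exact exists_semiconj_of_equiv_cycles ((sigmaFiberEquiv (cyclePeriod σ)).symm.trans
      ((Equiv.sigmaCongrRight φ).trans (sigmaFiberEquiv (cyclePeriod τ)))) fun q => (φ _ ⟨q, rfl⟩).2

theorem cycleCount_subtypePerm_add_compl {s : Set X} (hs : ∀ x, σ x ∈ s ↔ x ∈ s) (n : ℕ) :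
    cycleCount (σ.subtypePerm hs) n +
        cycleCount (σ.subtypePerm (p := (· ∈ sᶜ)) fun x => (hs x).not) n = cycleCount σ n := by
  classical
  let P : Cycles σ → Prop := Quotient.lift (· ∈ s) fun _ _ h => propext (h.mem_iff hs)
  let E₁ : {q // P q} ≃ Cycles (σ.subtypePerm hs) :=
    subtypeQuotientEquivQuotientSubtype (· ∈ s) P (fun _ => Iff.rfl)
      fun _ _ => sameCycle_subtypePerm
  let E₂ : {q // ¬P q} ≃ Cycles (σ.subtypePerm (p := (· ∈ sᶜ)) fun x => (hs x).not) :=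
    subtypeQuotientEquivQuotientSubtype (· ∈ sᶜ) (¬P ·) (fun _ => Iff.rfl)
      fun _ _ => sameCycle_subtypePerm
  let Ψ := (Equiv.sumCongr E₁.symm E₂.symm).trans (Equiv.sumCompl P)
  have hΨ : ∀ z, cyclePeriod σ (Ψ z) = Sum.elim (cyclePeriod _) (cyclePeriod _) z := by
    rintro (q | q) <;> induction q using Quotient.inductionOn
    · exact (minimalPeriod_subtypePerm hs _).symm
    · exact (minimalPeriod_subtypePerm (fun x => (hs x).not) _).symm
  rw [cycleCount, cycleCount, cycleCount, ← mk_subtype_sumElim_eq]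
  exact mk_congr (Ψ.subtypeEquiv fun z => by rw [hΨ])

theorem exists_semiconj_compl {s : Set X} {t : Set Y}
    (hs : ∀ x, σ x ∈ s ↔ x ∈ s) (ht : ∀ y, τ y ∈ t ↔ y ∈ t)
    [Finite (Cycles (σ.subtypePerm hs))] (hστ : ∃ e : X ≃ Y, Semiconj e σ τ)
    (hst : ∃ e : s ≃ t, Semiconj e (σ.subtypePerm hs) (τ.subtypePerm ht)) :
    ∃ e : ↥sᶜ ≃ ↥tᶜ, Semiconj e (σ.subtypePerm (p := (· ∈ sᶜ)) fun x => (hs x).not)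
      (τ.subtypePerm (p := (· ∈ tᶜ)) fun y => (ht y).not) := by
  rw [exists_semiconj_iff_cycleCount_eq] at hστ hst ⊢
  funext n
  refine Cardinal.eq_of_add_eq_add_left ?_ (cycleCount_lt_aleph0 (σ.subtypePerm hs) n)
  rw [cycleCount_subtypePerm_add_compl hs, hst, cycleCount_subtypePerm_add_compl ht, hστ]

theorem semiconj_subtypeCongr {σ τ : Perm X} {s t : Set X} [DecidablePred (· ∈ s)]
    [DecidablePred (· ∈ t)] {hs : ∀ x, σ x ∈ s ↔ x ∈ s} {ht : ∀ y, τ y ∈ t ↔ y ∈ t}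
    {e₀ : s ≃ t} {e₁ : ↥sᶜ ≃ ↥tᶜ} (h₀ : Semiconj e₀ (σ.subtypePerm hs) (τ.subtypePerm ht))
    (h₁ : Semiconj e₁ (σ.subtypePerm (p := (· ∈ sᶜ)) fun x => (hs x).not)
      (τ.subtypePerm (p := (· ∈ tᶜ)) fun y => (ht y).not)) :
    Semiconj (e₀.subtypeCongr e₁) σ τ := by
  intro x
  by_cases hx : x ∈ s
  · simpa [Equiv.subtypeCongr, hx, (hs x).mpr hx] using congrArg Subtype.val (h₀ ⟨x, hx⟩)
  · simpa [Equiv.subtypeCongr, hx, (hs x).not.mpr hx] using congrArg Subtype.val (h₁ ⟨x, hx⟩)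

def cyclesThrough (σ : Perm X) (s : Set X) : Set X := {x | ∃ k ∈ s, SameCycle σ k x}

section cyclesThrough

variable {s : Set X}

theorem apply_mem_cyclesThrough_iff (x : X) :
    σ x ∈ cyclesThrough σ s ↔ x ∈ cyclesThrough σ s :=
  exists_congr fun _ => and_congr_right fun _ => sameCycle_apply_right

theorem subset_cyclesThrough : s ⊆ cyclesThrough σ s := fun k hk => ⟨k, hk, SameCycle.rfl⟩

instance [Finite s] : Finite (Cycles (σ.subtypePerm (apply_mem_cyclesThrough_iff (s := s)))) := by
  refine Finite.of_surjective (fun k : s => Quotient.mk _ ⟨k, subset_cyclesThrough k.2⟩) ?_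
  rintro ⟨x, k, hk, hkx⟩
  exact ⟨⟨k, hk⟩, Quotient.sound (sameCycle_subtypePerm.mpr hkx)⟩

theorem exists_semiconj_cyclesThrough {τ : Perm X}
    (h : ∀ x ∈ s, ∀ m : ℤ, ((σ ^ m) x ∈ s ∨ (τ ^ m) x ∈ s) → (σ ^ m) x = (τ ^ m) x) :
    ∃ e : cyclesThrough σ s ≃ cyclesThrough τ s,
      Semiconj e (σ.subtypePerm apply_mem_cyclesThrough_iff)
        (τ.subtypePerm apply_mem_cyclesThrough_iff) ∧
      ∀ x (hx : x ∈ s), (e ⟨x, subset_cyclesThrough hx⟩ : X) = x := by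
  have hiff : ∀ x ∈ s, ∀ y ∈ s, ∀ m : ℤ, (σ ^ m) x = y ↔ (τ ^ m) x = y := by
    rintro x hx y hy m
    constructor
    · rintro rfl
      exact (h x hx m (Or.inl hy)).symm
    · rintro rfl
      exact h x hx m (Or.inr hy)
  let p : s × ℤ → cyclesThrough σ s := fun a => ⟨(σ ^ a.2) a.1, a.1, a.1.2, a.2, rfl⟩
  let r : s × ℤ → cyclesThrough τ s := fun a => ⟨(τ ^ a.2) a.1, a.1, a.1.2, a.2, rfl⟩
  have hp : Surjective p := by
    rintro ⟨x, k, hk, m, rfl⟩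
    exact ⟨(⟨k, hk⟩, m), rfl⟩
  have hr : Surjective r := by
    rintro ⟨x, k, hk, m, rfl⟩
    exact ⟨(⟨k, hk⟩, m), rfl⟩
  have hker : ∀ a b, p a = p b ↔ r a = r b := fun a b => by
    simp only [p, r, Subtype.ext_iff, zpow_apply_eq_zpow_apply_iff_zpow_sub]
    exact hiff _ a.1.2 _ b.1.2 _
  obtain ⟨e, he⟩ := hp.exists_equiv_apply_eq hr hker
  refine ⟨e, ?_, fun x hx => by simpa [p, r] using congrArg Subtype.val (he (⟨x, hx⟩, 0))⟩
  intro x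
  obtain ⟨⟨k, m⟩, rfl⟩ := hp x
  have hσ : σ.subtypePerm apply_mem_cyclesThrough_iff (p (k, m)) = p (k, 1 + m) :=
    Subtype.ext (by simp [p, zpow_one_add])
  rw [hσ, he, he]
  exact Subtype.ext (by simp [r, zpow_one_add])

end cyclesThrough

theorem exists_fixing_semiconj_iff {σ τ : Perm X} (hστ : ∃ v : Perm X, Semiconj v σ τ)
    (s : Set X) [Finite s] :
    (∃ u : Perm X, (∀ x ∈ s, u x = x) ∧ Semiconj u σ τ) ↔
      ∀ x ∈ s, ∀ m : ℤ, ((σ ^ m) x ∈ s ∨ (τ ^ m) x ∈ s) → (σ ^ m) x = (τ ^ m) x := by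
  constructor
  · rintro ⟨u, hu, hστu⟩ x hx m hm
    have hum : u ((σ ^ m) x) = (τ ^ m) x := by rw [hστu.perm_zpow, hu x hx]
    rcases hm with hσm | hτm
    · rw [← hum, hu _ hσm]
    · rw [← u.injective.eq_iff, hum, hu _ hτm]
  · intro h
    classical
    obtain ⟨e₀, he₀, hfix⟩ := exists_semiconj_cyclesThrough h
    obtain ⟨e₁, he₁⟩ := exists_semiconj_compl _ _ hστ ⟨e₀, he₀⟩
    refine ⟨e₀.subtypeCongr e₁, fun x hx => ?_, semiconj_subtypeCongr he₀ he₁⟩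
    simpa [Equiv.subtypeCongr, subset_cyclesThrough hx] using hfix x hx

end Equiv.Perm

/-- Disjointness criterion for local conjugacy classes in `S_∞`. -/
theorem local_conjugacy_disjointness
    (f g : Equiv.Perm ℕ) (hconj : ∃ v : Equiv.Perm ℕ, g = v * f * v⁻¹)
    (c : Finset ℕ) :
    {k : Equiv.Perm ℕ | ∃ h : Equiv.Perm ℕ, (∀ j ∈ c, h j = j) ∧ k = h * f * h⁻¹} ∩
      {k : Equiv.Perm ℕ | ∃ h : Equiv.Perm ℕ, (∀ j ∈ c, h j = j) ∧ k = h * g * h⁻¹} = ∅ ↔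
    ∃ k ∈ c, ∃ m : ℤ, ((f ^ m) k ∈ c ∨ (g ^ m) k ∈ c) ∧ (f ^ m) k ≠ (g ^ m) k := by
  obtain ⟨v, hv⟩ := hconj
  have hV : ∀ h : Equiv.Perm ℕ, (∀ j ∈ c, h j = j) ↔ h ∈ fixingSubgroup (Equiv.Perm ℕ) (c : Set ℕ) :=
    fun _ => (mem_fixingSubgroup_iff (Equiv.Perm ℕ)).symm
  simp only [hV, Subgroup.conj_inter_conj_eq_empty_iff]
  rw [← not_iff_not]
  push Not
  simpa only [← hV, Equiv.Perm.semiconj_iff_mul_inv_eq, Finset.mem_coe] using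
    Equiv.Perm.exists_fixing_semiconj_iff
      ⟨v, (Equiv.Perm.semiconj_iff_mul_inv_eq _ _ _).mpr hv.symm⟩ (c : Set ℕ)
end
end
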